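/- Let v ≥ 4 be an integer, let B ≥ 1 be a real number, and set m = ⌊(2v−3)/3⌋. Let ρ = (ρ_1,…,ρ_{v−1}) and ρ′ = (ρ′_1,…,ρ′_{v−1}) be tuples of real numbers with 0 ≤ ρ_i ≤ 2B and 0 ≤ ρ′_i ≤ 2B for all i, such that S_1(ρ) = S_1(ρ′) and S_2(ρ) ≥ S_2(ρ′) + 1. Then for every real y ≥ v²·2^m·B^{v−1}·C(v−1,m) + 1, one has ∏_{i=1}^{v−1}(vy + ρ′_i) < ∏_{i=1}^{v−1}(vy + ρ_i). -/
import Mathlib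


/-- The `j`-th elementary symmetric polynomial of the tuple `z`. -/
noncomputable def elemSymm {n : ℕ} (z : Fin n → ℝ) (j : ℕ) : ℝ :=
  ∑ J ∈ Finset.univ.powersetCard j, ∏ i ∈ J, z i

lemma binom2_key (n j : ℕ) :
    2 ^ (j + 1) * n.choose (j + 1) * (j + 1) = 2 * (n - j) * (2 ^ j * n.choose j) := by
  rw [mul_assoc (2 ^ (j + 1)), Nat.choose_succ_right_eq]
  ring

lemma binom2_le (n m : ℕ) (hn : 3 ≤ n) (hm : m = (2 * n - 1) / 3) (j : ℕ) :
    2 ^ j * n.choose j ≤ 2 * (2 ^ m * n.choose m) := by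
  have hdm := Nat.div_add_mod (2 * n - 1) 3
  have hmod : (2 * n - 1) % 3 < 3 := Nat.mod_lt _ (by norm_num)
  have h3m : 3 * m ≤ 2 * n - 1 := by omega
  have h2n : 2 * n ≤ 3 * m + 3 := by omega
  have hm1 : 1 ≤ m := by omega
  set a : ℕ → ℕ := fun k => 2 ^ k * n.choose k with ha
  have key : ∀ k, a (k + 1) * (k + 1) = 2 * (n - k) * a k := fun k => binom2_key n k
  have up : ∀ k, k ≤ m → a k ≤ a (k + 1) := by
    intro k hk
    have h1 : k + 1 ≤ 2 * (n - k) := by omega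
    have h2 : a k * (k + 1) ≤ a (k + 1) * (k + 1) := by
      rw [key k]
      calc a k * (k + 1) ≤ a k * (2 * (n - k)) := Nat.mul_le_mul_left _ h1
        _ = 2 * (n - k) * a k := by ring
    exact Nat.le_of_mul_le_mul_right h2 (by omega)
  have down : ∀ k, m + 1 ≤ k → a (k + 1) ≤ a k := by
    intro k hk
    have h1 : 2 * (n - k) ≤ k + 1 := by omega
    have h2 : a (k + 1) * (k + 1) ≤ a k * (k + 1) := by
      rw [key k]
      calc 2 * (n - k) * a k = a k * (2 * (n - k)) := by ring
        _ ≤ a k * (k + 1) := Nat.mul_le_mul_left _ h1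
    exact Nat.le_of_mul_le_mul_right h2 (by omega)
  have top : a j ≤ a (m + 1) := by
    rcases le_or_gt j (m + 1) with h | h
    · have mono : Monotone fun k => a (min k (m + 1)) := by
        apply monotone_nat_of_le_succ
        intro k
        rcases le_or_gt (k + 1) (m + 1) with hk | hk
        · simp only [min_eq_left hk, min_eq_left (by omega : k ≤ m + 1)]
          exact up k (by omega)
        · have h' : min (k + 1) (m + 1) = m + 1 := min_eq_right (by omega)
          rw [h', min_eq_right (by omega : m + 1 ≤ k)]
      have := mono h
      simpa [min_eq_left h] using this
    · have anti : Antitone fun k => a (max k (m + 1)) := by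
        apply antitone_nat_of_succ_le
        intro k
        rcases le_or_gt (m + 1) k with hk | hk
        · simp only [max_eq_left (by omega : m + 1 ≤ k + 1), max_eq_left hk]
          exact down k hk
        · rw [max_eq_right (by omega : k + 1 ≤ m + 1), max_eq_right (by omega : k ≤ m + 1)]
      have := anti h.le
      simpa [max_eq_left h.le] using this
  have last : a (m + 1) ≤ 2 * a m := by
    have h1 : 2 * (n - m) ≤ 2 * (m + 1) := by omega
    have h2 : a (m + 1) * (m + 1) ≤ 2 * a m * (m + 1) := by
      rw [key m]
      calc 2 * (n - m) * a m ≤ 2 * (m + 1) * a m := Nat.mul_le_mul_right _ h1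
        _ = 2 * a m * (m + 1) := by ring
    exact Nat.le_of_mul_le_mul_right h2 (by omega)
  calc a j ≤ a (m + 1) := top
    _ ≤ 2 * a m := last

open Finset in
lemma elemSymm_expand {n : ℕ} (z : Fin n → ℝ) (x : ℝ) :
    ∏ i, (x + z i) = ∑ j ∈ Finset.range (n + 1), elemSymm z j * x ^ (n - j) := by
  calc ∏ i, (x + z i)
      = ∑ t ∈ (univ : Finset (Fin n)).powerset, (∏ i ∈ t, z i) * ∏ _i ∈ univ \ t, x := by
        rw [← Finset.prod_add]
        exact Finset.prod_congr rfl fun i _ => add_comm _ _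
    _ = ∑ j ∈ range (n + 1), ∑ t ∈ powersetCard j univ, (∏ i ∈ t, z i) * x ^ (n - j) := by
        rw [Finset.sum_powerset]
        rw [Finset.card_univ, Fintype.card_fin]
        refine Finset.sum_congr rfl fun j hj => Finset.sum_congr rfl fun t ht => ?_
        rw [Finset.mem_powersetCard] at ht
        rw [Finset.prod_const, Finset.card_sdiff_of_subset ht.1, Finset.card_univ, Fintype.card_fin, ht.2]
    _ = ∑ j ∈ range (n + 1), elemSymm z j * x ^ (n - j) := by
        simp [elemSymm, Finset.sum_mul]

lemma elemSymm_nonneg {n : ℕ} (z : Fin n → ℝ) (hz : ∀ i, 0 ≤ z i) (j : ℕ) :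
    0 ≤ elemSymm z j :=
  Finset.sum_nonneg fun _J _ => Finset.prod_nonneg fun i _ => hz i

lemma elemSymm_le {n : ℕ} (z : Fin n → ℝ) (C : ℝ)
    (hz0 : ∀ i, 0 ≤ z i) (hz : ∀ i, z i ≤ C) (j : ℕ) :
    elemSymm z j ≤ (n.choose j : ℝ) * C ^ j := by
  have h : ∀ J ∈ (Finset.univ : Finset (Fin n)).powersetCard j, ∏ i ∈ J, z i ≤ C ^ j := by
    intro J hJ
    rw [Finset.mem_powersetCard] at hJ
    calc ∏ i ∈ J, z i ≤ ∏ _i ∈ J, C := Finset.prod_le_prod (fun i _ => hz0 i) (fun i _ => hz i)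
      _ = C ^ j := by rw [Finset.prod_const, hJ.2]
  calc elemSymm z j ≤ (Finset.univ.powersetCard j : Finset (Finset (Fin n))).card • C ^ j :=
        Finset.sum_le_card_nsmul _ _ _ h
    _ = (n.choose j : ℝ) * C ^ j := by
        rw [Finset.card_powersetCard, Finset.card_univ, Fintype.card_fin, nsmul_eq_mul]

lemma elemSymm_zero {n : ℕ} (z : Fin n → ℝ) : elemSymm z 0 = 1 := by
  simp [elemSymm]


lemma stmt4_aux (n : ℕ) (hn : 3 ≤ n) (B : ℝ) (hB : 1 ≤ B) (m : ℕ)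
    (hm' : m = (2 * n - 1) / 3) (w : ℝ) (hw : 4 ≤ w) (hnw : ((n - 2 : ℕ) : ℝ) ≤ w)
    (ρ ρ' : Fin n → ℝ)
    (hρ : ∀ i, 0 ≤ ρ i ∧ ρ i ≤ 2 * B) (hρ' : ∀ i, 0 ≤ ρ' i ∧ ρ' i ≤ 2 * B)
    (hS1 : elemSymm ρ 1 = elemSymm ρ' 1)
    (hS2 : elemSymm ρ' 2 + 1 ≤ elemSymm ρ 2)
    (y : ℝ) (hy : w ^ 2 * 2 ^ m * B ^ n * Nat.choose n m + 1 ≤ y) :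
    ∏ i, (w * y + ρ' i) < ∏ i, (w * y + ρ i) := by
  have hmn : m ≤ n := by
    have h1 : (2 * n - 1) / 3 * 3 ≤ 2 * n - 1 := Nat.div_mul_le_self _ _
    omega
  have hB0 : (0 : ℝ) ≤ B := le_trans zero_le_one hB
  have hchoose1 : (1 : ℝ) ≤ (n.choose m : ℝ) := by
    exact_mod_cast Nat.one_le_iff_ne_zero.mpr (Nat.choose_pos hmn).ne'
  set P : ℝ := 2 ^ m * (n.choose m : ℝ) * B ^ n with hPdef
  have hP1 : (1 : ℝ) ≤ P := by
    have h1 : (1 : ℝ) ≤ 2 ^ m := one_le_pow₀ (by norm_num)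
    have h2 : (1 : ℝ) ≤ B ^ n := one_le_pow₀ hB
    calc (1 : ℝ) = 1 * 1 * 1 := by ring
      _ ≤ 2 ^ m * (n.choose m : ℝ) * B ^ n := by
          apply mul_le_mul (mul_le_mul h1 hchoose1 zero_le_one (by linarith)) h2 zero_le_one
          positivity
  have hP0 : (0 : ℝ) ≤ P := by linarith
  have hy' : w ^ 2 * P + 1 ≤ y := by
    calc w ^ 2 * P + 1 = w ^ 2 * 2 ^ m * B ^ n * (n.choose m : ℝ) + 1 := by rw [hPdef]; ring
      _ ≤ y := hy
  have hw2P : (1 : ℝ) ≤ w ^ 2 * P + 1 := by nlinarith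
  have hy1 : (1 : ℝ) ≤ y := le_trans hw2P hy'
  set x : ℝ := w * y with hxdef
  have hx' : w * (w ^ 2 * P + 1) ≤ x := by
    rw [hxdef]
    exact mul_le_mul_of_nonneg_left hy' (by linarith)
  have hx1 : (1 : ℝ) ≤ x := by
    calc (1 : ℝ) = 1 * 1 := by ring
      _ ≤ w * (w ^ 2 * P + 1) := mul_le_mul (by linarith) hw2P zero_le_one (by linarith)
      _ ≤ x := hx'
  have hxpos : (0 : ℝ) < x := by linarith
  -- expansion of the difference
  have hdiff : ∏ i, (x + ρ i) - ∏ i, (x + ρ' i)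
      = ∑ j ∈ Finset.range (n + 1), (elemSymm ρ j - elemSymm ρ' j) * x ^ (n - j) := by
    rw [elemSymm_expand, elemSymm_expand, ← Finset.sum_sub_distrib]
    exact Finset.sum_congr rfl fun j _ => by ring
  have hsplit : ∑ j ∈ Finset.range (n + 1), (elemSymm ρ j - elemSymm ρ' j) * x ^ (n - j)
      = (elemSymm ρ 2 - elemSymm ρ' 2) * x ^ (n - 2)
        + ∑ j ∈ Finset.Ico 3 (n + 1), (elemSymm ρ j - elemSymm ρ' j) * x ^ (n - j) := by
    rw [Finset.range_eq_Ico,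
      ← Finset.sum_Ico_consecutive _ (by omega : 0 ≤ 3) (by omega : 3 ≤ n + 1)]
    congr 1
    rw [← Finset.range_eq_Ico, Finset.sum_range_succ, Finset.sum_range_succ,
      Finset.sum_range_one, elemSymm_zero, elemSymm_zero, hS1]
    ring
  -- bound each tail term
  set K : ℝ := 4 * P with hKdef
  have htail : ∀ j ∈ Finset.Ico 3 (n + 1),
      |(elemSymm ρ j - elemSymm ρ' j) * x ^ (n - j)| ≤ K * x ^ (n - 3) := by
    intro j hj
    rw [Finset.mem_Ico] at hj
    have hb : ∀ z : Fin n → ℝ, (∀ i, 0 ≤ z i ∧ z i ≤ 2 * B) →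
        |elemSymm z j| ≤ (n.choose j : ℝ) * (2 * B) ^ j := by
      intro z hz
      rw [abs_of_nonneg (elemSymm_nonneg z (fun i => (hz i).1) j)]
      exact elemSymm_le z (2 * B) (fun i => (hz i).1) (fun i => (hz i).2) j
    have h1 : |elemSymm ρ j - elemSymm ρ' j| ≤ 2 * ((n.choose j : ℝ) * (2 * B) ^ j) := by
      calc |elemSymm ρ j - elemSymm ρ' j| ≤ |elemSymm ρ j| + |elemSymm ρ' j| := abs_sub _ _
        _ ≤ 2 * ((n.choose j : ℝ) * (2 * B) ^ j) := by
            have hb1 := hb ρ hρ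
            have hb2 := hb ρ' hρ'
            linarith
    have h2 : (n.choose j : ℝ) * (2 * B) ^ j ≤ 2 * P := by
      have hnat : 2 ^ j * n.choose j ≤ 2 * (2 ^ m * n.choose m) := binom2_le n m hn hm' j
      have hnat' : ((2 : ℝ)) ^ j * (n.choose j : ℝ) ≤ 2 * (2 ^ m * (n.choose m : ℝ)) := by
        exact_mod_cast hnat
      have hBj : B ^ j ≤ B ^ n := pow_le_pow_right₀ hB (by omega)
      have hBjpos : (0 : ℝ) ≤ B ^ j := by positivity
      calc (n.choose j : ℝ) * (2 * B) ^ j = (2 ^ j * (n.choose j : ℝ)) * B ^ j := by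
            rw [mul_pow]; ring
        _ ≤ (2 * (2 ^ m * (n.choose m : ℝ))) * B ^ n := by
            apply mul_le_mul hnat' hBj hBjpos
            positivity
        _ = 2 * P := by rw [hPdef]; ring
    have h3 : x ^ (n - j) ≤ x ^ (n - 3) :=
      pow_le_pow_right₀ hx1 (Nat.sub_le_sub_left hj.1 n)
    have h4 : (0 : ℝ) ≤ x ^ (n - j) := by positivity
    have habs0 : (0 : ℝ) ≤ |elemSymm ρ j - elemSymm ρ' j| := abs_nonneg _
    calc |(elemSymm ρ j - elemSymm ρ' j) * x ^ (n - j)|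
        = |elemSymm ρ j - elemSymm ρ' j| * x ^ (n - j) := by
          rw [abs_mul, abs_of_nonneg h4]
      _ ≤ (2 * (2 * P)) * x ^ (n - 3) := by
          apply mul_le_mul (by linarith) h3 h4 (by linarith)
      _ = K * x ^ (n - 3) := by rw [hKdef]; ring
  have hcard : (Finset.Ico 3 (n + 1)).card = n - 2 := by rw [Nat.card_Ico]; omega
  have hR : |∑ j ∈ Finset.Ico 3 (n + 1), (elemSymm ρ j - elemSymm ρ' j) * x ^ (n - j)|
      ≤ ((n - 2 : ℕ) : ℝ) * (K * x ^ (n - 3)) := by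
    calc |∑ j ∈ Finset.Ico 3 (n + 1), (elemSymm ρ j - elemSymm ρ' j) * x ^ (n - j)|
        ≤ ∑ j ∈ Finset.Ico 3 (n + 1), |(elemSymm ρ j - elemSymm ρ' j) * x ^ (n - j)| :=
          Finset.abs_sum_le_sum_abs _ _
      _ ≤ (Finset.Ico 3 (n + 1)).card • (K * x ^ (n - 3)) :=
          Finset.sum_le_card_nsmul _ _ _ htail
      _ = ((n - 2 : ℕ) : ℝ) * (K * x ^ (n - 3)) := by rw [hcard, nsmul_eq_mul]
  -- the size comparison : (n-2) * K < x
  have hbig : ((n - 2 : ℕ) : ℝ) * K < x := by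
    have h1 : ((n - 2 : ℕ) : ℝ) * K ≤ w * (4 * P) := by
      rw [hKdef]
      exact mul_le_mul hnw le_rfl (by linarith) (by linarith)
    have hw2 : (4 : ℝ) ≤ w ^ 2 := by nlinarith
    have h4w : (4 : ℝ) * P ≤ w ^ 2 * P := mul_le_mul_of_nonneg_right hw2 hP0
    have h2 : w * (4 * P) ≤ w * (w ^ 2 * P) :=
      mul_le_mul_of_nonneg_left h4w (by linarith)
    have h3 : w * (w ^ 2 * P) < w * (w ^ 2 * P + 1) := by
      have := mul_lt_mul_of_pos_left (by linarith : w ^ 2 * P < w ^ 2 * P + 1)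
        (by linarith : (0 : ℝ) < w)
      linarith
    linarith
  -- put everything together
  have hpow_eq : x ^ (n - 2) = x ^ (n - 3) * x := by
    rw [show n - 2 = (n - 3) + 1 from by omega, pow_succ]
  have hxp3 : (0 : ℝ) < x ^ (n - 3) := pow_pos hxpos _
  have hxp2 : (0 : ℝ) < x ^ (n - 2) := pow_pos hxpos _
  have hS2d : (1 : ℝ) ≤ elemSymm ρ 2 - elemSymm ρ' 2 := by linarith
  have hRlb : -(((n - 2 : ℕ) : ℝ) * (K * x ^ (n - 3)))
      ≤ ∑ j ∈ Finset.Ico 3 (n + 1), (elemSymm ρ j - elemSymm ρ' j) * x ^ (n - j) :=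
    neg_le_of_abs_le hR
  have hfinal : 0 < ∏ i, (x + ρ i) - ∏ i, (x + ρ' i) := by
    rw [hdiff, hsplit]
    have hterm : x ^ (n - 2) ≤ (elemSymm ρ 2 - elemSymm ρ' 2) * x ^ (n - 2) :=
      le_mul_of_one_le_left (le_of_lt hxp2) hS2d
    have hgap : ((n - 2 : ℕ) : ℝ) * (K * x ^ (n - 3)) < x ^ (n - 2) := by
      rw [hpow_eq]
      calc ((n - 2 : ℕ) : ℝ) * (K * x ^ (n - 3))
          = (((n - 2 : ℕ) : ℝ) * K) * x ^ (n - 3) := by ring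
        _ < x * x ^ (n - 3) := mul_lt_mul_of_pos_right hbig hxp3
        _ = x ^ (n - 3) * x := by ring
    linarith
  linarith

theorem stmt_4 (v : ℕ) (hv : 4 ≤ v) (B : ℝ) (hB : 1 ≤ B) (m : ℕ)
    (hm : m = (2 * v - 3) / 3) (ρ ρ' : Fin (v - 1) → ℝ)
    (hρ : ∀ i, 0 ≤ ρ i ∧ ρ i ≤ 2 * B) (hρ' : ∀ i, 0 ≤ ρ' i ∧ ρ' i ≤ 2 * B)
    (hS1 : elemSymm ρ 1 = elemSymm ρ' 1)
    (hS2 : elemSymm ρ' 2 + 1 ≤ elemSymm ρ 2) :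
    ∀ y : ℝ, (v : ℝ) ^ 2 * 2 ^ m * B ^ (v - 1) * Nat.choose (v - 1) m + 1 ≤ y →
      ∏ i, ((v : ℝ) * y + ρ' i) < ∏ i, ((v : ℝ) * y + ρ i) := by
  intro y hy
  refine stmt4_aux (v - 1) (by omega) B hB m ?_ (v : ℝ) ?_ ?_ ρ ρ' hρ hρ' hS1 hS2 y hy
  · rw [hm]; congr 1; omega
  · exact_mod_cast hv
  · exact_mod_cast (by omega : v - 1 - 2 ≤ v)
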